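/- Let g be a symmetric invertible 4×4 real matrix, let W have Weyl symmetries with respect to g, let S be a symmetric 4×4 real matrix, and let K_{jabc} be defined as in the context. Then the trace of K over its last two indices vanishes: Σ_{b,c} g^{bc} K_{jabc} = 0 for all j,a in Fin 4. -/

import Mathlib

/-
Under contraction with `g^{bc}`, the three terms of `K_{jabc}` in which `b` and `c` both sit
on `W` (`S_a{}^d W_{bdcj}`, `S_a{}^d W_{bjcd}` and `g_{aj} S^{de} W_{bdce}`) are traces of `W`
and vanish. Each of the other five reduces to `X = S^{de} W_{adje}`, using the symmetry of `g`
and hence of `g⁻¹`; the term `g_{bc}` contributes `g^{bc} g_{bc} = 4`, so the total is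
`(1 + 1 - 4 + 1 + 1) X = 0`.
-/

open Finset

/-- The tensor `K_{jabc}` built from the Schouten-type tensor `S` and the Weyl-type
tensor `W`:
`K_{jabc} = S_c{}^{d} W_{abjd} + S_b{}^{d} W_{acjd} + S_a{}^{d} W_{bdcj} + S_a{}^{d} W_{bjcd}
  − g_{bc} S^{de} W_{adje} − 2 g_{aj} S^{de} W_{bdce} + g_{ac} S^{de} W_{bdje}
  + g_{ab} S^{de} W_{cdje}`. -/
noncomputable def Ktensor (g ginv S : Fin 4 → Fin 4 → ℝ)
    (W : Fin 4 → Fin 4 → Fin 4 → Fin 4 → ℝ) (j a b c : Fin 4) : ℝ :=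
  (∑ d, (∑ e, S c e * ginv e d) * W a b j d)
    + (∑ d, (∑ e, S b e * ginv e d) * W a c j d)
    + (∑ d, (∑ e, S a e * ginv e d) * W b d c j)
    + (∑ d, (∑ e, S a e * ginv e d) * W b j c d)
    - g b c * (∑ d, ∑ e, (∑ p, ∑ q, ginv d p * ginv e q * S p q) * W a d j e)
    - 2 * g a j * (∑ d, ∑ e, (∑ p, ∑ q, ginv d p * ginv e q * S p q) * W b d c e)
    + g a c * (∑ d, ∑ e, (∑ p, ∑ q, ginv d p * ginv e q * S p q) * W b d j e)
    + g a b * (∑ d, ∑ e, (∑ p, ∑ q, ginv d p * ginv e q * S p q) * W c d j e)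

section
variable {ι : Type*} [Fintype ι] {ginv : ι → ι → ℝ}

theorem contract_mixed_eq_raised (hginv : ∀ a b, ginv a b = ginv b a) (S V : ι → ι → ℝ) :
    ∑ b, ∑ c, ginv b c * ∑ d, (∑ e, S c e * ginv e d) * V b d
      = ∑ d, ∑ e, (∑ p, ∑ q, ginv d p * ginv e q * S p q) * V d e := by
  simp only [mul_sum, sum_mul]
  refine sum_congr rfl fun b _ => sum_comm.trans <| sum_congr rfl fun d _ =>
    sum_congr rfl fun c _ => sum_congr rfl fun e _ => ?_
  rw [hginv e d]
  ring

theorem contract_mixed_eq_raised' (hginv : ∀ a b, ginv a b = ginv b a) (S V : ι → ι → ℝ) :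
    ∑ b, ∑ c, ginv b c * ∑ d, (∑ e, S b e * ginv e d) * V c d
      = ∑ d, ∑ e, (∑ p, ∑ q, ginv d p * ginv e q * S p q) * V d e := by
  rw [sum_comm, ← contract_mixed_eq_raised hginv]
  exact sum_congr rfl fun c _ => sum_congr rfl fun b _ => by rw [hginv b c]

theorem contract_sum_eq_zero {W : ι → ι → ι → ι → ℝ}
    (hW : ∀ b d, ∑ a, ∑ c, ginv a c * W a b c d = 0)
    {κ : Type*} [Fintype κ] (f : κ → ℝ) (x y : κ → ι) :
    ∑ b, ∑ c, ginv b c * ∑ k, f k * W b (x k) c (y k) = 0 := by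
  have hk (k : κ) : ∑ b, ∑ c, ginv b c * (f k * W b (x k) c (y k)) = 0 := by
    simp only [mul_left_comm _ (f k), ← mul_sum, hW, mul_zero]
  simp only [mul_sum]
  rw [sum_congr rfl fun b _ => sum_comm, sum_comm]
  exact sum_eq_zero fun k _ => hk k

theorem contract_mul_sum_sum_eq_zero {W : ι → ι → ι → ι → ℝ}
    (hW : ∀ b d, ∑ a, ∑ c, ginv a c * W a b c d = 0) (r : ℝ) (T : ι → ι → ℝ) :
    ∑ b, ∑ c, ginv b c * (r * ∑ d, ∑ e, T d e * W b d c e) = 0 := by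
  simpa [Fintype.sum_prod_type, mul_sum, mul_assoc] using
    contract_sum_eq_zero hW (fun p : ι × ι => r * T p.1 p.2) Prod.fst Prod.snd

variable [DecidableEq ι] {g : ι → ι → ℝ}

theorem Matrix.of_mul_of_eq_one_iff :
    Matrix.of ginv * Matrix.of g = 1 ↔ ∀ a b, ∑ c, ginv a c * g c b = if a = b then 1 else 0 := by
  simp only [← Matrix.ext_iff, Matrix.mul_apply, Matrix.of_apply, Matrix.one_apply]

theorem sum_mul_inv_eq_ite (hinv : ∀ a b, ∑ c, ginv a c * g c b = if a = b then 1 else 0)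
    (a b : ι) : ∑ c, g a c * ginv c b = if a = b then 1 else 0 :=
  Matrix.of_mul_of_eq_one_iff.1 (mul_eq_one_comm.1 (Matrix.of_mul_of_eq_one_iff.2 hinv)) a b

theorem inv_symm_of_symm (hg : ∀ a b, g a b = g b a)
    (hinv : ∀ a b, ∑ c, ginv a c * g c b = if a = b then 1 else 0) (a b : ι) :
    ginv a b = ginv b a := by
  have hG : (Matrix.of g).IsSymm := Matrix.IsSymm.ext fun a b => hg b a
  have hGinv : (Matrix.of g)⁻¹ = Matrix.of ginv :=
    Matrix.inv_eq_left_inv (Matrix.of_mul_of_eq_one_iff.2 hinv)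
  simpa [hGinv] using (hG.inv.apply a b).symm

theorem contract_metric_right (hg : ∀ a b, g a b = g b a)
    (hinv : ∀ a b, ∑ c, ginv a c * g c b = if a = b then 1 else 0) (f : ι → ℝ) (a : ι) :
    ∑ b, ∑ c, ginv b c * (g a c * f b) = f a := by
  calc ∑ b, ∑ c, ginv b c * (g a c * f b) = ∑ b, (∑ c, ginv b c * g c a) * f b := by
        simp only [sum_mul, hg a, mul_assoc]
    _ = f a := by simp [hinv]

theorem contract_metric_left (hinv : ∀ a b, ∑ c, g a c * ginv c b = if a = b then 1 else 0)
    (f : ι → ℝ) (a : ι) :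
    ∑ b, ∑ c, ginv b c * (g a b * f c) = f a := by
  calc ∑ b, ∑ c, ginv b c * (g a b * f c) = ∑ c, (∑ b, g a b * ginv b c) * f c := by
        rw [sum_comm]
        simp only [sum_mul]
        exact sum_congr rfl fun c _ => sum_congr rfl fun b _ => by ring
    _ = f a := by simp [hinv]

theorem contract_metric_self (hg : ∀ a b, g a b = g b a)
    (hinv : ∀ a b, ∑ c, ginv a c * g c b = if a = b then 1 else 0) (x : ℝ) :
    ∑ b, ∑ c, ginv b c * (g b c * x) = Fintype.card ι * x := by
  calc ∑ b, ∑ c, ginv b c * (g b c * x) = ∑ b, (∑ c, ginv b c * g c b) * x := by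
        refine sum_congr rfl fun b _ => ?_
        rw [sum_mul]
        exact sum_congr rfl fun c _ => by rw [hg b c, mul_assoc]
    _ = Fintype.card ι * x := by simp [hinv]

end

theorem Ktensor_traceless_last_two_general
    (g ginv : Fin 4 → Fin 4 → ℝ)
    (hg : ∀ a b, g a b = g b a)
    (hginv : ∀ a b, ∑ c, ginv a c * g c b = if a = b then (1 : ℝ) else 0)
    (W : Fin 4 → Fin 4 → Fin 4 → Fin 4 → ℝ)
    (hWtr : ∀ b d, ∑ a, ∑ c, ginv a c * W a b c d = 0)
    (S : Fin 4 → Fin 4 → ℝ)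
    (j a : Fin 4) :
    ∑ b, ∑ c, ginv b c * Ktensor g ginv S W j a b c = 0 := by
  have hginv_symm := inv_symm_of_symm hg hginv
  simp only [Ktensor, mul_add, mul_sub, sum_add_distrib, sum_sub_distrib]
  rw [contract_mixed_eq_raised hginv_symm, contract_mixed_eq_raised' hginv_symm,
    contract_sum_eq_zero hWtr _ (fun d => d) (fun _ => j),
    contract_sum_eq_zero hWtr _ (fun _ => j) (fun d => d),
    contract_metric_self hg hginv, contract_mul_sum_sum_eq_zero hWtr,
    contract_metric_right hg hginv, contract_metric_left (sum_mul_inv_eq_ite hginv)]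
  simp only [Fintype.card_fin, Nat.cast_ofNat]
  ring

/-- The trace of `K` over its last two indices vanishes: `g^{bc} K_{jabc} = 0`. -/
theorem Ktensor_traceless_last_two
    (g ginv : Fin 4 → Fin 4 → ℝ)
    (hg : ∀ a b, g a b = g b a)
    (hginv : ∀ a b, ∑ c, ginv a c * g c b = if a = b then (1 : ℝ) else 0)
    (W : Fin 4 → Fin 4 → Fin 4 → Fin 4 → ℝ)
    (hW1 : ∀ a b c d, W a b c d = - W b a c d)
    (hW2 : ∀ a b c d, W a b c d = - W a b d c)
    (hW3 : ∀ a b c d, W a b c d = W c d a b)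
    (hW4 : ∀ a b c d, W a b c d + W a c d b + W a d b c = 0)
    (hWtr : ∀ b d, ∑ a, ∑ c, ginv a c * W a b c d = 0)
    (S : Fin 4 → Fin 4 → ℝ)
    (hS : ∀ a b, S a b = S b a)
    (j a : Fin 4) :
    ∑ b, ∑ c, ginv b c * Ktensor g ginv S W j a b c = 0 :=
  Ktensor_traceless_last_two_general g ginv hg hginv W hWtr S j a
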